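/- arXiv:1307.1610 — 2 statements merged into one kernel-verified Lean document; each statement's English description precedes it below -/
import Mathlib

section
/- For every r ≥ 1 and n ∈ ℕ, the order-r q-Frobenius–Euler polynomial expands in the order-1 basis as H^{(r)}_{n,q}(x|λ) = ∑_{k=0}^{n} C(n,k)_q · H^{(r−1)}_{n−k,q}(λ) · H^{(1)}_{k,q}(x|λ), where for r = 1 one uses H^{(0)}_{n−k,q}(λ) = δ_{0,n−k}. -/
open Finset Polynomial

/-- The `q`-integer `[n]_q = (1 - q^n)/(1 - q)` viewed in `ℂ`. -/
noncomputable def qInt (q : ℝ) (n : ℕ) : ℂ := (1 - (q : ℂ) ^ n) / (1 - (q : ℂ))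

/-- The `q`-factorial `[n]_q! = ∏_{j=1}^n [j]_q`. -/
noncomputable def qFact (q : ℝ) (n : ℕ) : ℂ := ∏ j ∈ Finset.range n, qInt q (j + 1)

/-- The `q`-binomial coefficient `[n]_q!/([k]_q! [n-k]_q!)`. -/
noncomputable def qBinom (q : ℝ) (n k : ℕ) : ℂ := qFact q n / (qFact q k * qFact q (n - k))

/-- The formal `q`-exponential `e_q(t) = ∑ t^n/[n]_q!` in `ℂ[x][[t]]`. -/
noncomputable def qExp (q : ℝ) : PowerSeries (Polynomial ℂ) :=
  PowerSeries.mk fun n => Polynomial.C (1 / qFact q n)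

/-- The formal series `e_q(xt) = ∑ x^n t^n/[n]_q!` in `ℂ[x][[t]]`. -/
noncomputable def qExpX (q : ℝ) : PowerSeries (Polynomial ℂ) :=
  PowerSeries.mk fun n => Polynomial.C (1 / qFact q n) * Polynomial.X ^ n

/-- `H : ℕ → ℂ[x]` is the family of order-`r` `q`-Frobenius-Euler polynomials
`H^{(r)}_{n,q}(x|λ)`:
`(∑ H_n t^n/[n]_q!) ⬝ (e_q(t) - λ)^r = (1 - λ)^r e_q(xt)` in `ℂ[x][[t]]`. -/
def IsqFrobeniusEulerOrder (q : ℝ) (lam : ℂ) (r : ℕ) (H : ℕ → Polynomial ℂ) : Prop :=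
  (PowerSeries.mk fun n => Polynomial.C (1 / qFact q n) * H n) *
      (qExp q - PowerSeries.C (Polynomial.C lam)) ^ r =
    PowerSeries.C (Polynomial.C ((1 - lam) ^ r)) * qExpX q

/-!
Write `F_H = ∑ H n t^n/[n]_q!` and `A = e_q(t) - λ`. Setting `x = 0` in the order-`(r-1)` identity
gives `F_{H^{(r-1)}(λ)} A^(r-1) = (1-λ)^(r-1)`, because `e_q(0·t) = 1`. Multiplying it by the order-1
identity gives `F_{H^{(r-1)}(λ)} F_{H^{(1)}} A^r = (1-λ)^r e_q(xt) = F_{H^{(r)}} A^r`. As `A ≠ 0` (its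
`t`-coefficient is `1`) and `ℂ[x][[t]]` is a domain, `F_{H^{(r)}} = F_{H^{(r-1)}(λ)} F_{H^{(1)}}`, and the
coefficient of `t^n/[n]_q!` in a product of two such series is the `q`-binomial convolution.
-/

noncomputable def qEGF (q : ℝ) (H : ℕ → ℂ[X]) : PowerSeries ℂ[X] :=
  PowerSeries.mk fun n => C (1 / qFact q n) * H n

section

variable {q : ℝ}

theorem qInt_ne_zero (hq : |q| ≠ 1) {n : ℕ} (hn : n ≠ 0) : qInt q n ≠ 0 := by
  have one_sub_pow_ne_zero : ∀ m : ℕ, m ≠ 0 → (1 : ℂ) - (q : ℂ) ^ m ≠ 0 := fun m hm h => by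
    have hqm : q ^ m = 1 := by exact_mod_cast (sub_eq_zero.mp h).symm
    exact hq ((pow_eq_one_iff_of_nonneg (abs_nonneg q) hm).mp (by rw [← abs_pow, hqm, abs_one]))
  exact div_ne_zero (one_sub_pow_ne_zero n hn) (by simpa using one_sub_pow_ne_zero 1 one_ne_zero)

theorem qFact_ne_zero (hq : |q| ≠ 1) (n : ℕ) : qFact q n ≠ 0 :=
  Finset.prod_ne_zero_iff.mpr fun j _ => qInt_ne_zero hq j.succ_ne_zero

@[simp]
theorem qFact_zero : qFact q 0 = 1 := by simp [qFact]

theorem isqFrobeniusEulerOrder_iff {lam : ℂ} {r : ℕ} {H : ℕ → ℂ[X]} :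
    IsqFrobeniusEulerOrder q lam r H ↔
      qEGF q H * (qExp q - PowerSeries.C (C lam)) ^ r =
        PowerSeries.C (C ((1 - lam) ^ r)) * qExpX q :=
  Iff.rfl

theorem qEGF_injective (hq : |q| ≠ 1) : Function.Injective (qEGF q) := by
  intro G K h
  funext n
  have hn := congrArg (PowerSeries.coeff n) h
  simp only [qEGF, PowerSeries.coeff_mk] at hn
  exact mul_left_cancel₀ (by simpa using qFact_ne_zero hq n) hn

theorem qEGF_mul_qEGF (hq : |q| ≠ 1) (G K : ℕ → ℂ[X]) :
    qEGF q G * qEGF q K =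
      qEGF q fun n => ∑ k ∈ range (n + 1), C (qBinom q n k) * G (n - k) * K k := by
  ext1 n
  simp only [qEGF, PowerSeries.coeff_mul, PowerSeries.coeff_mk]
  rw [← Nat.sum_antidiagonal_swap, Nat.sum_antidiagonal_eq_sum_range_succ_mk, mul_sum]
  refine sum_congr rfl fun k _ => ?_
  have hcoeff : 1 / qFact q (n - k) * (1 / qFact q k) = 1 / qFact q n * qBinom q n k := by
    rw [qBinom, one_div_mul_one_div, ← mul_div_assoc, one_div_mul_cancel (qFact_ne_zero hq n),
      mul_comm]
  simp only [Prod.swap_prod_mk]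
  rw [mul_mul_mul_comm, ← C_mul, hcoeff, C_mul]
  ring

theorem qExp_sub_C_ne_zero (hq : |q| ≠ 1) (c : ℂ[X]) : qExp q - PowerSeries.C c ≠ 0 := by
  intro h
  have h1 := congrArg (PowerSeries.coeff 1) h
  simp only [qExp, map_sub, PowerSeries.coeff_mk, PowerSeries.coeff_C, one_ne_zero, if_false,
    sub_zero, map_zero, C_eq_zero, one_div, inv_eq_zero] at h1
  exact qFact_ne_zero hq 1 h1

theorem IsqFrobeniusEulerOrder.eval_zero {lam : ℂ} {r : ℕ} {H : ℕ → ℂ[X]}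
    (h : IsqFrobeniusEulerOrder q lam r H) :
    qEGF q (fun n => C ((H n).eval 0)) * (qExp q - PowerSeries.C (C lam)) ^ r =
      PowerSeries.C (C ((1 - lam) ^ r)) := by
  set φ : ℂ[X] →+* ℂ[X] := C.comp (evalRingHom 0)
  have map_qEGF : PowerSeries.map φ (qEGF q H) = qEGF q fun n => C ((H n).eval 0) := by
    ext1 n
    simp [φ, qEGF]
  have map_qExp : PowerSeries.map φ (qExp q) = qExp q := by
    ext1 n
    simp [φ, qExp]
  have map_qExpX : PowerSeries.map φ (qExpX q) = 1 := by
    ext1 n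
    cases n <;> simp [φ, qExpX]
  rw [isqFrobeniusEulerOrder_iff] at h
  simpa [φ, map_qEGF, map_qExp, map_qExpX] using congrArg (PowerSeries.map φ) h

theorem IsqFrobeniusEulerOrder.qEGF_eq_mul (hq : |q| ≠ 1) {lam : ℂ} {a b : ℕ}
    {Hab Ha Hb : ℕ → ℂ[X]} (hab : IsqFrobeniusEulerOrder q lam (a + b) Hab)
    (ha : IsqFrobeniusEulerOrder q lam a Ha) (hb : IsqFrobeniusEulerOrder q lam b Hb) :
    qEGF q Hab = qEGF q (fun n => C ((Ha n).eval 0)) * qEGF q Hb := by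
  set A := qExp q - PowerSeries.C (C lam)
  refine mul_right_cancel₀ (pow_ne_zero (a + b) (qExp_sub_C_ne_zero hq (C lam))) ?_
  calc qEGF q Hab * A ^ (a + b)
      = PowerSeries.C (C ((1 - lam) ^ a)) * (PowerSeries.C (C ((1 - lam) ^ b)) * qExpX q) := by
        rw [isqFrobeniusEulerOrder_iff.mp hab, pow_add, C_mul, map_mul, mul_assoc]
    _ = (qEGF q (fun n => C ((Ha n).eval 0)) * A ^ a) * (qEGF q Hb * A ^ b) := by
        rw [ha.eval_zero, isqFrobeniusEulerOrder_iff.mp hb]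
    _ = qEGF q (fun n => C ((Ha n).eval 0)) * qEGF q Hb * A ^ (a + b) := by ring

end

theorem qFrobeniusEulerOrder_expansion_in_order_one_basis_general
    (q : ℝ) (hq0 : 0 < q) (hq1 : q < 1) (lam : ℂ)
    (r : ℕ) (hr : 1 ≤ r)
    (Hr : ℕ → Polynomial ℂ) (hHr : IsqFrobeniusEulerOrder q lam r Hr)
    (Hrm : ℕ → Polynomial ℂ) (hHrm : IsqFrobeniusEulerOrder q lam (r - 1) Hrm)
    (H1 : ℕ → Polynomial ℂ) (hH1 : IsqFrobeniusEulerOrder q lam 1 H1) (n : ℕ) :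
    Hr n = ∑ k ∈ Finset.range (n + 1),
      Polynomial.C (qBinom q n k * (Hrm (n - k)).eval 0) * H1 k := by
  have hq : |q| ≠ 1 := by rw [abs_of_pos hq0]; exact hq1.ne
  rw [← Nat.sub_add_cancel hr] at hHr
  have hgen := hHr.qEGF_eq_mul hq hHrm hH1
  rw [qEGF_mul_qEGF hq] at hgen
  simp only [congrFun (qEGF_injective hq hgen) n, C_mul, mul_assoc]

/-- For `r ≥ 1`,
`H^{(r)}_{n,q}(x|λ) = ∑_{k=0}^n C(n,k)_q H^{(r-1)}_{n-k,q}(λ) H^{(1)}_{k,q}(x|λ)`. -/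
theorem qFrobeniusEulerOrder_expansion_in_order_one_basis
    (q : ℝ) (hq0 : 0 < q) (hq1 : q < 1) (lam : ℂ) (hlam : lam ≠ 1)
    (r : ℕ) (hr : 1 ≤ r)
    (Hr : ℕ → Polynomial ℂ) (hHr : IsqFrobeniusEulerOrder q lam r Hr)
    (Hrm : ℕ → Polynomial ℂ) (hHrm : IsqFrobeniusEulerOrder q lam (r - 1) Hrm)
    (H1 : ℕ → Polynomial ℂ) (hH1 : IsqFrobeniusEulerOrder q lam 1 H1) (n : ℕ) :
    Hr n = ∑ k ∈ Finset.range (n + 1),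
      Polynomial.C (qBinom q n k * (Hrm (n - k)).eval 0) * H1 k :=
  qFrobeniusEulerOrder_expansion_in_order_one_basis_general q hq0 hq1 lam r hr Hr hHr Hrm hHrm H1
    hH1 n
end

section
/- Let r ≥ 1, n ∈ ℕ and let p ∈ ℂ[x] be a polynomial with deg p ≤ n. Then p(x) = ∑_{k=0}^{n} C_k^r · H^{(r)}_{k,q}(x|λ), where C_k^r = (1/([k]_q! · (1 − λ)^r)) · ∑_{l=0}^{n−k} ( ∑_{j=0}^{r} binom(r,j) · (−λ)^{r−j} · ∑_{(l_1,…,l_j) ∈ ℕ^j, l_1+⋯+l_j = l} 1/([l_1]_q! ⋯ [l_j]_q!) ) · (D_q^{k+l} p)(0); here binom(r,j) is the ordinary binomial coefficient, the inner sum over the empty tuple (j = 0) equals δ_{l,0}, and D_q^{k+l} p denotes the (k+l)-fold q-derivative of p. -/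
open Finset Polynomial

/-- The `q`-derivative on `ℂ[x]`, determined by `D_q x^n = [n]_q x^(n-1)`. -/
noncomputable def qDeriv (q : ℝ) (p : Polynomial ℂ) : Polynomial ℂ :=
  p.sum fun n a => Polynomial.C (a * qInt q n) * Polynomial.X ^ (n - 1)

/-!
Comparing coefficients of `t^m` in the generating-function identity gives
`(1 - λ)^r x^m / [m]_q! = ∑_{k + l = m} b_l H_k / [k]_q!`, where `b_l` is the coefficient of
`t^l` in `(e_q(t) - λ)^r`, computed by the binomial theorem. This triangular system expresses every
monomial through the `H_k`; substituting it into `p = ∑ p_m x^m`, where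
`p_m = (D_q^m p)(0) / [m]_q!`, and regrouping by `k` gives the expansion.
-/

lemma qInt_succ_ne_zero {q : ℝ} (hq0 : 0 < q) (hq1 : q < 1) (m : ℕ) : qInt q (m + 1) ≠ 0 := by
  have hpow : (q : ℂ) ^ (m + 1) ≠ 1 := by
    exact_mod_cast (pow_lt_one₀ hq0.le hq1 m.succ_ne_zero).ne
  have hq : (q : ℂ) ≠ 1 := by exact_mod_cast hq1.ne
  exact div_ne_zero (sub_ne_zero.2 hpow.symm) (sub_ne_zero.2 hq.symm)

lemma qFact_ne_zero_s14 {q : ℝ} (hq0 : 0 < q) (hq1 : q < 1) (m : ℕ) : qFact q m ≠ 0 :=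
  prod_ne_zero_iff.2 fun j _ => qInt_succ_ne_zero hq0 hq1 j

lemma qFact_succ (q : ℝ) (m : ℕ) : qFact q (m + 1) = qFact q m * qInt q (m + 1) :=
  prod_range_succ _ m

lemma coeff_qDeriv (q : ℝ) (p : ℂ[X]) (m : ℕ) :
    (qDeriv q p).coeff m = p.coeff (m + 1) * qInt q (m + 1) := by
  rw [qDeriv, Polynomial.sum_def, finsetSum_coeff]
  simp only [coeff_C_mul, coeff_X_pow]
  rw [sum_eq_single (m + 1)]
  · simp
  · intro b _ hb
    rcases b with _ | b
    · simp [qInt]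
    · simp [show m ≠ b by omega]
  · intro h
    simp [notMem_support_iff.1 h]

lemma eval_zero_iterate_qDeriv (q : ℝ) (s : ℕ) (p : ℂ[X]) :
    ((qDeriv q)^[s] p).eval 0 = qFact q s * p.coeff s := by
  induction s generalizing p with
  | zero => simp [qFact, coeff_zero_eq_eval_zero]
  | succ s ih =>
    rw [Function.iterate_succ_apply, ih, coeff_qDeriv, qFact_succ]
    ring

lemma PowerSeries.coeff_pow_eq_sum_antidiagonalTuple {R : Type*} [CommSemiring R]
    (φ : PowerSeries R) (j l : ℕ) :
    coeff l (φ ^ j) = ∑ t ∈ Finset.Nat.antidiagonalTuple j l, ∏ i, coeff (t i) φ := by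
  classical
  rw [← Fin.prod_const, coeff_prod, finsuppAntidiag, sum_map,
    ← piAntidiag_univ_fin_eq_antidiagonalTuple]
  exact sum_attach _ fun (t : Fin j → ℕ) => ∏ i, coeff (t i) φ

noncomputable def qExpSubPowCoeff (q : ℝ) (lam : ℂ) (r l : ℕ) : ℂ :=
  ∑ j ∈ range (r + 1), (r.choose j : ℂ) * (-lam) ^ (r - j) *
    ∑ t ∈ Finset.Nat.antidiagonalTuple j l, ∏ i, 1 / qFact q (t i)

lemma coeff_qExp_sub_C_pow (q : ℝ) (lam : ℂ) (r l : ℕ) :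
    PowerSeries.coeff l ((qExp q - PowerSeries.C (C lam)) ^ r) =
      C (qExpSubPowCoeff q lam r l) := by
  rw [sub_eq_add_neg, add_pow, map_sum, qExpSubPowCoeff, map_sum]
  refine sum_congr rfl fun j _ => ?_
  rw [← map_neg, ← map_neg, ← map_pow, ← map_pow, ← map_natCast (PowerSeries.C.comp C),
    RingHom.comp_apply, PowerSeries.coeff_mul_C, PowerSeries.coeff_mul_C,
    PowerSeries.coeff_pow_eq_sum_antidiagonalTuple]
  simp only [qExp, PowerSeries.coeff_mk, map_sum, map_prod, map_mul, map_pow, map_neg, map_natCast]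
  ring

lemma C_mul_X_pow_eq_sum_antidiagonal {q : ℝ} {lam : ℂ} {r : ℕ} {H : ℕ → ℂ[X]}
    (hH : IsqFrobeniusEulerOrder q lam r H) (m : ℕ) :
    C ((1 - lam) ^ r / qFact q m) * X ^ m =
      ∑ kl ∈ antidiagonal m, C (qExpSubPowCoeff q lam r kl.2 / qFact q kl.1) * H kl.1 := by
  have h := congrArg (PowerSeries.coeff m) hH
  rw [PowerSeries.coeff_mul, PowerSeries.coeff_C_mul] at h
  simp only [PowerSeries.coeff_mk, qExpX, coeff_qExp_sub_C_pow] at h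
  rw [div_eq_mul_one_div, C_mul, mul_assoc, ← h]
  refine sum_congr rfl fun kl _ => ?_
  rw [one_div, div_eq_inv_mul, C_mul]
  ring

lemma eq_sum_of_C_mul_X_pow_eq_sum_antidiagonal {K : Type*} [Field K] {H : ℕ → K[X]}
    {a : ℕ → K} {c : ℕ → ℕ → K} (ha : ∀ m, a m ≠ 0)
    (hX : ∀ m, C (a m) * X ^ m = ∑ kl ∈ antidiagonal m, C (c kl.1 kl.2) * H kl.1)
    {n : ℕ} {p : K[X]} (hp : p.natDegree ≤ n) :
    p = ∑ k ∈ range (n + 1),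
      C (∑ l ∈ range (n - k + 1), p.coeff (k + l) / a (k + l) * c k l) * H k := by
  have hmonomial (m : ℕ) : C (p.coeff m) * X ^ m =
      ∑ k ∈ range (m + 1), C (p.coeff (k + (m - k)) / a (k + (m - k)) * c k (m - k)) * H k := by
    rw [← Nat.sum_antidiagonal_eq_sum_range_succ
      (fun k l => C (p.coeff (k + l) / a (k + l) * c k l) * H k)]
    calc C (p.coeff m) * X ^ m = C (p.coeff m / a m) * (C (a m) * X ^ m) := by
          rw [← mul_assoc, ← C_mul, div_mul_cancel₀ _ (ha m)]
      _ = _ := by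
          rw [hX, mul_sum]
          refine sum_congr rfl fun kl hkl => ?_
          rw [mem_antidiagonal.1 hkl, ← mul_assoc, ← C_mul]
  calc p = ∑ m ∈ range (n + 1), C (p.coeff m) * X ^ m :=
        as_sum_range_C_mul_X_pow' p (Nat.lt_succ_of_le hp)
    _ = ∑ k ∈ range (n + 1), ∑ l ∈ range (n + 1 - k),
          C (p.coeff (k + l) / a (k + l) * c k l) * H k := by
      simp only [hmonomial]
      exact sum_range_diag_flip (n + 1) fun k l => C (p.coeff (k + l) / a (k + l) * c k l) * H k
    _ = _ := by
      refine sum_congr rfl fun k hk => ?_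
      rw [map_sum, sum_mul, show n + 1 - k = n - k + 1 by have := mem_range.1 hk; omega]

theorem expansion_in_qFrobeniusEulerOrder_basis_general
    (q : ℝ) (hq0 : 0 < q) (hq1 : q < 1) (lam : ℂ) (hlam : lam ≠ 1)
    (r : ℕ)
    (H : ℕ → Polynomial ℂ) (hH : IsqFrobeniusEulerOrder q lam r H)
    (n : ℕ) (p : Polynomial ℂ) (hp : p.natDegree ≤ n) :
    p = ∑ k ∈ Finset.range (n + 1),
      Polynomial.C ((1 / (qFact q k * (1 - lam) ^ r)) *
        ∑ l ∈ Finset.range (n - k + 1),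
          (∑ j ∈ Finset.range (r + 1), (r.choose j : ℂ) * (-lam) ^ (r - j) *
            ∑ t ∈ Finset.Nat.antidiagonalTuple j l, ∏ i, 1 / qFact q (t i)) *
          ((qDeriv q)^[k + l] p).eval 0) * H k := by
  have hlam' : (1 - lam) ^ r ≠ 0 := pow_ne_zero _ (sub_ne_zero.2 hlam.symm)
  have hF := qFact_ne_zero_s14 hq0 hq1
  refine (eq_sum_of_C_mul_X_pow_eq_sum_antidiagonal (a := fun m => (1 - lam) ^ r / qFact q m)
    (c := fun k l => qExpSubPowCoeff q lam r l / qFact q k) (fun m => div_ne_zero hlam' (hF m))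
    (C_mul_X_pow_eq_sum_antidiagonal hH) hp).trans ?_
  refine sum_congr rfl fun k _ => ?_
  rw [mul_sum]
  refine congrArg (fun x => C x * H k) (sum_congr rfl fun l _ => ?_)
  rw [eval_zero_iterate_qDeriv, qExpSubPowCoeff]
  field_simp

/-- For `r ≥ 1`, every `p ∈ ℂ[x]` with `deg p ≤ n` expands as
`p = ∑_{k=0}^n C_k^r H^{(r)}_{k,q}(x|λ)` with
`C_k^r = (1/([k]_q! (1-λ)^r)) ∑_{l=0}^{n-k}
  (∑_{j=0}^r binom(r,j) (-λ)^{r-j} ∑_{l₁+⋯+l_j=l} 1/([l₁]_q! ⋯ [l_j]_q!)) ((D_q)^{k+l} p)(0)`. -/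
theorem expansion_in_qFrobeniusEulerOrder_basis
    (q : ℝ) (hq0 : 0 < q) (hq1 : q < 1) (lam : ℂ) (hlam : lam ≠ 1)
    (r : ℕ) (hr : 1 ≤ r)
    (H : ℕ → Polynomial ℂ) (hH : IsqFrobeniusEulerOrder q lam r H)
    (n : ℕ) (p : Polynomial ℂ) (hp : p.natDegree ≤ n) :
    p = ∑ k ∈ Finset.range (n + 1),
      Polynomial.C ((1 / (qFact q k * (1 - lam) ^ r)) *
        ∑ l ∈ Finset.range (n - k + 1),
          (∑ j ∈ Finset.range (r + 1), (r.choose j : ℂ) * (-lam) ^ (r - j) *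
            ∑ t ∈ Finset.Nat.antidiagonalTuple j l, ∏ i, 1 / qFact q (t i)) *
          ((qDeriv q)^[k + l] p).eval 0) * H k :=
  expansion_in_qFrobeniusEulerOrder_basis_general q hq0 hq1 lam hlam r H hH n p hp
end
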